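/- There exists a bipersistence module with no good barcode: Let P = {0,1,2} × {0,1,2} with the product order, and let M be the P-module defined by M_{(0,0)} = 0, M_{(1,0)} = M_{(2,0)} = k, M_{(0,1)} = k, M_{(1,1)} = k², M_{(2,1)} = k, M_{(0,2)} = M_{(1,2)} = k, M_{(2,2)} = 0, with structure maps: M_{(1,0),(2,0)} = id, M_{(0,1),(1,1)}(x) = (x,0), M_{(1,1),(2,1)}(x,y) = x + y, M_{(0,2),(1,2)} = id, M_{(1,0),(1,1)}(x) = (0,x), M_{(2,0),(2,1)} = id, M_{(0,1),(0,2)} = id, M_{(1,1),(1,2)}(x,y) = x (and all maps to or from the zero spaces are zero). Then M has no good barcode: there is no multiset B of subsets of P such that for all x ≤ y in P, the rank of M_{x,y} equals the number of elements S of B (counted with multiplicity) with x ∈ S and y ∈ S. -/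

import Mathlib

set_option autoImplicit false

open Classical

/-- A persistence module over a poset `P`, with coefficients in a field `k`:
a functor from `P` (viewed as a category) to the category of `k`-vector spaces. -/
structure PersMod (k : Type) [Field k] (P : Type) [Preorder P] : Type 1 where
  V : P → Type
  [acg : ∀ x, AddCommGroup (V x)]
  [mod : ∀ x, Module k (V x)]
  map : ∀ {x y : P}, x ≤ y → V x →ₗ[k] V y
  map_id : ∀ (x : P) (v : V x), map (le_refl x) v = v
  map_comp : ∀ {x y z : P} (h₁ : x ≤ y) (h₂ : y ≤ z) (v : V x),
    map h₂ (map h₁ v) = map (le_trans h₁ h₂) v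

attribute [instance] PersMod.acg PersMod.mod

section Core

variable {k : Type} [Field k] {P : Type} [Preorder P]

/-- Order-convexity of a subset of a poset. -/
def IsConvexSet (I : Set P) : Prop :=
  ∀ ⦃s u t : P⦄, s ∈ I → t ∈ I → s ≤ u → u ≤ t → u ∈ I

/-- Any two points of `I` are joined by a zigzag of comparable elements of `I`. -/
def ZigzagConnected (I : Set P) : Prop :=
  ∀ s ∈ I, ∀ t ∈ I, ∃ (m : ℕ) (u : ℕ → P), u 0 = s ∧ u m = t ∧
    (∀ i ≤ m, u i ∈ I) ∧ ∀ i < m, u i ≤ u (i + 1) ∨ u (i + 1) ≤ u i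

/-- An interval in a poset: a nonempty, order-convex, zigzag-connected subset. -/
def IsPersInterval (I : Set P) : Prop :=
  I.Nonempty ∧ IsConvexSet I ∧ ZigzagConnected I

theorem isConvexSet_empty : IsConvexSet (∅ : Set P) :=
  fun _ _ _ hs _ _ _ => absurd hs (Set.notMem_empty _)

theorem isConvexSet_Ici (z : P) : IsConvexSet (Set.Ici z) :=
  fun _ _ _ hs _ hsu _ => le_trans hs hsu

/-- The value of the interval module `k_I` at `x`: a copy of `k` if `x ∈ I`, and `0` otherwise,
realized as a submodule of `k`. -/
def intervalSpace (k : Type) [Field k] {P : Type} [Preorder P] (I : Set P) (x : P) :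
    Submodule k k where
  carrier := {v | x ∈ I ∨ v = 0}
  add_mem' := by
    rintro a b (ha | ha) (hb | hb)
    · exact Or.inl ha
    · exact Or.inl ha
    · exact Or.inl hb
    · exact Or.inr (by rw [ha, hb, add_zero])
  zero_mem' := Or.inr rfl
  smul_mem' := by
    rintro c a (ha | ha)
    · exact Or.inl ha
    · exact Or.inr (by rw [ha, smul_zero])

theorem mem_intervalSpace {I : Set P} {x : P} {v : k} :
    v ∈ intervalSpace k I x ↔ x ∈ I ∨ v = 0 := Iff.rfl

/-- The interval module `k_I` of an order-convex set `I`: a copy of `k` at points of `I` and `0`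
elsewhere, with identity internal maps within `I` and zero maps otherwise. -/
noncomputable def intervalModule (k : Type) [Field k] {P : Type} [Preorder P]
    (I : Set P) (hI : IsConvexSet I) : PersMod k P where
  V x := ↥(intervalSpace k I x)
  acg := fun _ => inferInstance
  mod := fun _ => inferInstance
  map {x y} _ :=
    { toFun := fun v => ⟨if y ∈ I then (v : k) else 0, by
        by_cases hy : y ∈ I
        · exact Or.inl hy
        · exact Or.inr (if_neg hy)⟩
      map_add' := by
        intro a b
        apply Subtype.ext
        by_cases hy : y ∈ I <;> simp [hy]
      map_smul' := by
        intro c a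
        apply Subtype.ext
        by_cases hy : y ∈ I <;> simp [hy] }
  map_id := by
    intro x v
    apply Subtype.ext
    by_cases hx : x ∈ I
    · simp [hx]
    · rcases v.property with h | h
      · exact absurd h hx
      · simp [hx, h]
  map_comp := by
    intro x y z h₁ h₂ v
    apply Subtype.ext
    by_cases hz : z ∈ I
    · by_cases hy : y ∈ I
      · simp [hz, hy]
      · have hx : x ∉ I := fun hx => hy (hI hx hz h₁ h₂)
        rcases v.property with h | h
        · exact absurd h hx
        · simp [hz, hy, h]
    · simp [hz]

/-- Pointwise direct sum of a family of persistence modules. -/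
noncomputable def dSum {Λ : Type} (Mf : Λ → PersMod k P) : PersMod k P where
  V x := Π₀ l, (Mf l).V x
  acg := fun _ => inferInstance
  mod := fun _ => inferInstance
  map h := DFinsupp.mapRange.linearMap fun l => (Mf l).map h
  map_id := by
    intro x v
    ext l
    simp [DFinsupp.mapRange.linearMap_apply, (Mf l).map_id]
  map_comp := by
    intro x y z h₁ h₂ v
    ext l
    simp [DFinsupp.mapRange.linearMap_apply, (Mf l).map_comp]

/-- Pointwise direct sum of two persistence modules. -/
def prodMod (M N : PersMod k P) : PersMod k P where
  V x := M.V x × N.V x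
  acg := fun _ => inferInstance
  mod := fun _ => inferInstance
  map h := (M.map h).prodMap (N.map h)
  map_id := by
    intro x v
    cases v with
    | mk a b => simp [M.map_id, N.map_id]
  map_comp := by
    intro x y z h₁ h₂ v
    cases v with
    | mk a b => simp [M.map_comp, N.map_comp]

/-- Isomorphism of persistence modules: a family of linear isomorphisms commuting with the
structure maps. -/
def PersIso (M N : PersMod k P) : Prop :=
  ∃ e : ∀ x, M.V x ≃ₗ[k] N.V x,
    ∀ (x y : P) (h : x ≤ y) (v : M.V x), e y (M.map h v) = N.map h (e x v)

/-- The zero persistence module (realized as the interval module of the empty set). -/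
noncomputable def zeroPM (k : Type) [Field k] (P : Type) [Preorder P] : PersMod k P :=
  intervalModule k (∅ : Set P) isConvexSet_empty

def IsZeroMod (M : PersMod k P) : Prop := ∀ (x : P) (v : M.V x), v = 0

/-- A persistence module is indecomposable if it is nonzero and any direct sum decomposition
has a zero summand. -/
def Indecomposable (M : PersMod k P) : Prop :=
  ¬ IsZeroMod M ∧
    ∀ M' M'' : PersMod k P, PersIso M (prodMod M' M'') → IsZeroMod M' ∨ IsZeroMod M''

/-- Pointwise finite-dimensionality. -/
def PFD (M : PersMod k P) : Prop := ∀ x, Module.Finite k (M.V x)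

theorem isPersInterval_Ici (z : P) : IsPersInterval (Set.Ici z) := by
  refine ⟨⟨z, le_refl z⟩, isConvexSet_Ici z, ?_⟩
  intro s hs t ht
  refine ⟨2, fun i => if i = 0 then s else if i = 1 then z else t, by simp, by simp, ?_, ?_⟩
  · intro i hi
    interval_cases i <;> simp [hs, ht, Set.mem_Ici]
  · intro i hi
    interval_cases i
    · exact Or.inr hs
    · exact Or.inl ht

end Core

/-- A good barcode of a `P`-module `M`: a multiset `B` of subsets of `P` such that for all
`x ≤ y` the rank of `M_{x,y}` equals the number of members of `B` (with multiplicity)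
containing both `x` and `y`. -/
noncomputable def IsGoodBarcode {k : Type} [Field k] {P : Type} [Preorder P]
    (M : PersMod k P) (B : Multiset (Set P)) : Prop :=
  ∀ (x y : P) (h : x ≤ y),
    Module.finrank k (LinearMap.range (M.map h)) =
      Multiset.card (B.filter fun S => x ∈ S ∧ y ∈ S)

/-- The rank invariant of the bipersistence module `M` of Example 4.4:
`M_{(0,0)} = 0`, `M_{(1,0)} = M_{(2,0)} = k`, `M_{(0,1)} = k`, `M_{(1,1)} = k²`,
`M_{(2,1)} = k`, `M_{(0,2)} = M_{(1,2)} = k`, `M_{(2,2)} = 0`, with structure maps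
`M_{(1,0),(2,0)} = id`, `M_{(0,1),(1,1)} x = (x,0)`, `M_{(1,1),(2,1)} (x,y) = x+y`,
`M_{(0,2),(1,2)} = id`, `M_{(1,0),(1,1)} x = (0,x)`, `M_{(2,0),(2,1)} = id`,
`M_{(0,1),(0,2)} = id`, `M_{(1,1),(1,2)} (x,y) = x`. -/
def rankM (x y : Fin 3 × Fin 3) : ℕ :=
  if x = ((0 : Fin 3), (0 : Fin 3)) ∨ y = ((2 : Fin 3), (2 : Fin 3)) ∨
      (x = ((1 : Fin 3), (0 : Fin 3)) ∧ y = ((1 : Fin 3), (2 : Fin 3))) then 0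
  else if x = ((1 : Fin 3), (1 : Fin 3)) ∧ y = ((1 : Fin 3), (1 : Fin 3)) then 2
  else 1

/-!
The bars of a good barcode through `(2,1)` and through `(1,2)` are unique, since `M` is
one-dimensional there. Both contain `(0,1)` and `(1,1)`, because the maps from these points to
`(2,1)` and to `(1,2)` are nonzero; as `M_{(0,1),(1,1)}` has rank one, they are the same bar. But
that bar contains `(1,0)`, since `M_{(1,0),(2,1)} ≠ 0`, and does not, since `M_{(1,0),(1,2)} = 0`.
So the obstruction only involves the rank invariant.
-/

theorem Matrix.rank_eq_zero_iff {m n K : Type} [Fintype n] [Field K] {A : Matrix m n K} :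
    A.rank = 0 ↔ A = 0 := by
  rw [Matrix.rank, Submodule.finrank_eq_zero, LinearMap.range_eq_bot]
  refine ⟨fun h => Matrix.mulVec_injective (funext fun v => ?_),
    fun h => h ▸ Matrix.mulVecLin_zero⟩
  simpa [Matrix.zero_mulVec] using LinearMap.congr_fun h v

theorem Matrix.rank_eq_one_of_ne_zero {m n K : Type} [Fintype m] [Fintype n] [Field K]
    {A : Matrix m n K} (hcard : Fintype.card m ≤ 1 ∨ Fintype.card n ≤ 1) (hA : A ≠ 0) :
    A.rank = 1 := by
  have hle : A.rank ≤ 1 := hcard.elim A.rank_le_card_height.trans A.rank_le_card_width.trans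
  have hne : A.rank ≠ 0 := mt Matrix.rank_eq_zero_iff.mp hA
  omega

def exampleDim : Fin 3 × Fin 3 → ℕ := fun x =>
  if x = (0, 0) ∨ x = (2, 2) then 0 else if x = (1, 1) then 2 else 1

/-- `exampleEntry x y i j` is the `(i, j)` entry of the matrix of `M_{x,y} : k ^ exampleDim x →
k ^ exampleDim y`; coordinates `0` and `1` of `M_{(1,1)} = k²` are `x` and `y` in `(x, y)`. -/
def exampleEntry (x y : Fin 3 × Fin 3) (i j : ℕ) : ℕ :=
  if x = y ∧ i = j ∨ (x, y, i, j) ∈ ([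
    ((1, 0), (2, 0), 0, 0), ((1, 0), (1, 1), 1, 0), ((1, 0), (2, 1), 0, 0),
    ((2, 0), (2, 1), 0, 0), ((0, 1), (1, 1), 0, 0), ((0, 1), (2, 1), 0, 0),
    ((0, 1), (0, 2), 0, 0), ((0, 1), (1, 2), 0, 0), ((1, 1), (2, 1), 0, 0),
    ((1, 1), (2, 1), 0, 1), ((1, 1), (1, 2), 0, 0), ((0, 2), (1, 2), 0, 0)
  ] : List ((Fin 3 × Fin 3) × (Fin 3 × Fin 3) × ℕ × ℕ)) then 1 else 0

-- Over `ℕ`, functoriality is decided by evaluation; the matrices over `k` are the casts.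
def exampleMatrixNat (x y : Fin 3 × Fin 3) :
    Matrix (Fin (exampleDim y)) (Fin (exampleDim x)) ℕ :=
  Matrix.of fun i j => exampleEntry x y i j

theorem exampleMatrixNat_self : ∀ x, exampleMatrixNat x x = 1 := by decide

theorem exampleMatrixNat_mul : ∀ x y z, x ≤ y → y ≤ z →
    exampleMatrixNat y z * exampleMatrixNat x y = exampleMatrixNat x z := by decide

theorem exampleEntry_le_one (x y : Fin 3 × Fin 3) (i j : ℕ) : exampleEntry x y i j ≤ 1 := by
  unfold exampleEntry
  split_ifs <;> simp

theorem exampleDim_le_one : ∀ x : Fin 3 × Fin 3, x ≠ (1, 1) → exampleDim x ≤ 1 := by decide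

theorem rankM_eq_ite : ∀ x y : Fin 3 × Fin 3, x ≤ y → (x, y) ≠ ((1, 1), (1, 1)) →
    rankM x y = if exampleMatrixNat x y = 0 then 0 else 1 := by decide

noncomputable def exampleMatrix (k : Type) [Field k] (x y : Fin 3 × Fin 3) :
    Matrix (Fin (exampleDim y)) (Fin (exampleDim x)) k :=
  (exampleMatrixNat x y).map (Nat.castRingHom k)

section ExampleMatrix

variable {k : Type} [Field k]

theorem exampleMatrix_self (x : Fin 3 × Fin 3) : exampleMatrix k x x = 1 := by
  rw [exampleMatrix, exampleMatrixNat_self, Matrix.map_one _ (map_zero _) (map_one _)]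

theorem exampleMatrix_mul {x y z : Fin 3 × Fin 3} (hxy : x ≤ y) (hyz : y ≤ z) :
    exampleMatrix k y z * exampleMatrix k x y = exampleMatrix k x z := by
  rw [exampleMatrix, exampleMatrix, exampleMatrix, ← exampleMatrixNat_mul x y z hxy hyz,
    Matrix.map_mul]

theorem exampleMatrix_eq_zero_iff {x y : Fin 3 × Fin 3} :
    exampleMatrix k x y = 0 ↔ exampleMatrixNat x y = 0 := by
  refine ⟨fun h => Matrix.ext fun i j => ?_,
    fun h => by rw [exampleMatrix, h, Matrix.map_zero _ (map_zero _)]⟩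
  have hij := congrFun (congrFun h i) j
  have := exampleEntry_le_one x y i j
  interval_cases hN : exampleEntry x y i j
  · exact hN
  · simp [exampleMatrix, exampleMatrixNat, hN] at hij

theorem rank_exampleMatrix {x y : Fin 3 × Fin 3} (hxy : x ≤ y) :
    (exampleMatrix k x y).rank = rankM x y := by
  by_cases hdiag : (x, y) = ((1, 1), (1, 1))
  · obtain ⟨rfl, rfl⟩ := Prod.mk.inj hdiag
    rw [exampleMatrix_self, Matrix.rank_one, Fintype.card_fin]
    rfl
  rw [rankM_eq_ite x y hxy hdiag]
  split_ifs with hN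
  · exact Matrix.rank_eq_zero_iff.mpr (exampleMatrix_eq_zero_iff.mpr hN)
  · refine Matrix.rank_eq_one_of_ne_zero ?_ (mt exampleMatrix_eq_zero_iff.mp hN)
    simp only [Fintype.card_fin]
    by_cases hx : x = (1, 1)
    · exact Or.inl (exampleDim_le_one y fun hy => hdiag (by rw [hx, hy]))
    · exact Or.inr (exampleDim_le_one x hx)

end ExampleMatrix

noncomputable def exampleModule (k : Type) [Field k] : PersMod k (Fin 3 × Fin 3) where
  V x := Fin (exampleDim x) → k
  map {x y} _ := (exampleMatrix k x y).mulVecLin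
  map_id x v := by simp [exampleMatrix_self]
  map_comp h₁ h₂ v := by
    simp [Matrix.mulVec_mulVec, exampleMatrix_mul h₁ h₂]

theorem finrank_range_exampleModule_map (k : Type) [Field k] {x y : Fin 3 × Fin 3} (h : x ≤ y) :
    Module.finrank k (LinearMap.range ((exampleModule k).map h)) = rankM x y :=
  rank_exampleMatrix h

theorem mem_iff_card_filter_pos {P : Type} {B : Multiset (Set P)} {z : P} {S : Set P}
    (hS : B.filter (fun T => z ∈ T ∧ z ∈ T) = {S}) (x : P) :
    x ∈ S ↔ 0 < Multiset.card (B.filter fun T => x ∈ T ∧ z ∈ T) := by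
  have : B.filter (fun T => x ∈ T ∧ z ∈ T) = ({S} : Multiset (Set P)).filter (x ∈ ·) := by
    rw [← hS, Multiset.filter_filter]
    exact Multiset.filter_congr fun T _ => by simp
  rw [this, Multiset.filter_singleton]
  split_ifs with hx <;> simp [hx]

theorem not_forall_card_filter_eq_rankM (B : Multiset (Set (Fin 3 × Fin 3))) :
    ¬ ∀ x y : Fin 3 × Fin 3, x ≤ y →
      Multiset.card (B.filter fun S => x ∈ S ∧ y ∈ S) = rankM x y := by
  intro hB
  obtain ⟨S₀, hS₀⟩ := Multiset.card_eq_one.mp ((hB (2, 1) (2, 1) le_rfl).trans rfl)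
  obtain ⟨S₁, hS₁⟩ := Multiset.card_eq_one.mp ((hB (1, 2) (1, 2) le_rfl).trans rfl)
  obtain ⟨T, hT⟩ := Multiset.card_eq_one.mp ((hB (0, 1) (1, 1) (by decide)).trans rfl)
  have mem₀ (x) (hx : x ≤ (2, 1)) : x ∈ S₀ ↔ 0 < rankM x (2, 1) := by
    rw [mem_iff_card_filter_pos hS₀, hB x _ hx]
  have mem₁ (x) (hx : x ≤ (1, 2)) : x ∈ S₁ ↔ 0 < rankM x (1, 2) := by
    rw [mem_iff_card_filter_pos hS₁, hB x _ hx]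
  have eq_T {S} (hSB : S ∈ B) (h₀ : ((0, 1) : Fin 3 × Fin 3) ∈ S)
      (h₁ : ((1, 1) : Fin 3 × Fin 3) ∈ S) : S = T :=
    Multiset.mem_singleton.mp (hT ▸ Multiset.mem_filter.mpr ⟨hSB, h₀, h₁⟩)
  have hS₀T : S₀ = T :=
    eq_T (Multiset.mem_of_mem_filter (hS₀ ▸ Multiset.mem_singleton_self S₀))
      ((mem₀ _ (by decide)).mpr (by decide)) ((mem₀ _ (by decide)).mpr (by decide))
  have hS₁T : S₁ = T :=
    eq_T (Multiset.mem_of_mem_filter (hS₁ ▸ Multiset.mem_singleton_self S₁))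
      ((mem₁ _ (by decide)).mpr (by decide)) ((mem₁ _ (by decide)).mpr (by decide))
  have h₀ : ((1, 0) : Fin 3 × Fin 3) ∈ S₀ := (mem₀ _ (by decide)).mpr (by decide)
  have h₁ : ((1, 0) : Fin 3 × Fin 3) ∉ S₁ := mt (mem₁ _ (by decide)).mp (by decide)
  exact h₁ (hS₁T ▸ hS₀T ▸ h₀)

theorem not_isGoodBarcode_of_finrank_eq_rankM {k : Type} [Field k]
    {M : PersMod k (Fin 3 × Fin 3)}
    (hM : ∀ (x y : Fin 3 × Fin 3) (h : x ≤ y),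
      Module.finrank k (LinearMap.range (M.map h)) = rankM x y)
    (B : Multiset (Set (Fin 3 × Fin 3))) : ¬ IsGoodBarcode M B :=
  fun hB => not_forall_card_filter_eq_rankM B fun x y h => (hB x y h).symm.trans (hM x y h)

/-- **A bipersistence module with no good barcode.**
There is a persistence module over the grid `{0,1,2} × {0,1,2}` (namely the module of
Example 4.4, which is pinned down here by its rank invariant `rankM`, recording the ranks of
all its structure maps and, on the diagonal, the dimensions of all its vector spaces)
which admits no good barcode. -/
theorem exists_module_with_no_good_barcode (k : Type) [Field k] :
    ∃ M : PersMod k (Fin 3 × Fin 3),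
      (∀ x, Module.Finite k (M.V x)) ∧
      (∀ (x y : Fin 3 × Fin 3) (h : x ≤ y),
        Module.finrank k (LinearMap.range (M.map h)) = rankM x y) ∧
      ¬ ∃ B : Multiset (Set (Fin 3 × Fin 3)), IsGoodBarcode M B := by
  refine ⟨exampleModule k, fun x => inferInstanceAs (Module.Finite k (Fin (exampleDim x) → k)),
    fun _ _ => finrank_range_exampleModule_map k, ?_⟩
  rintro ⟨B, hB⟩
  exact not_isGoodBarcode_of_finrank_eq_rankM (fun _ _ => finrank_range_exampleModule_map k) B hB
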